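/- Assume N ≥ 1, p > 2N/(N+1), and f is a continuous nondecreasing function on [0,∞) with f(0) = 0 such that ∫_1^∞ f(s) s^{-p(N+1)/N} ds < ∞. Let v_k be the explicit Barenblatt–Prattle fundamental solution of the p-Laplace heat equation: for p = 2, v_k(x,t) = k (4πt)^{-N/2} e^{-|x|²/(4t)}; for p ≠ 2, v_k(x,t) = t^{-λ} ( C_k − d |x t^{-λ/N}|^{p/(p−1)} )_+^{(p−1)/(p−2)} with λ = N/(N(p−2)+p), d = ((p−2)/p)(λ/N)^{1/(p−1)} and C_k > 0 the constant making ∫ v_k(x,t) dx = k. Then for every k, R, T > 0 one has ∫_0^T ∫_{B_R} f(v_k(x,t)) dx dt < ∞. -/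

import Mathlib

open MeasureTheory Set Filter Topology
open scoped RealInnerProductSpace ENNReal NNReal

noncomputable section

abbrev Spc (N : ℕ) := EuclideanSpace ℝ (Fin N)

/-- spatial gradient of `u (·, t)` at `x`. -/
noncomputable def sgrad {N : ℕ} (u : Spc N → ℝ → ℝ) (x : Spc N) (t : ℝ) : Spc N :=
  gradient (fun y => u y t) x

/-- weak solution of `∂ₜ u - Δ_p u + f(u) = 0` on `Ω × I`. -/
def IsWeakSolution {N : ℕ} (p : ℝ) (f : ℝ → ℝ) (Ω : Set (Spc N)) (I : Set ℝ)
    (u : Spc N → ℝ → ℝ) : Prop :=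
  MeasureTheory.LocallyIntegrableOn (fun z : Spc N × ℝ => u z.1 z.2) (Ω ×ˢ I) ∧
  MeasureTheory.LocallyIntegrableOn (fun z : Spc N × ℝ => ‖sgrad u z.1 z.2‖ ^ p) (Ω ×ˢ I) ∧
  MeasureTheory.LocallyIntegrableOn (fun z : Spc N × ℝ => f (u z.1 z.2)) (Ω ×ˢ I) ∧
  ∀ (φ : Spc N → ℝ → ℝ) (g G : ℝ → ℝ),
    ContDiff ℝ (⊤ : ℕ∞) (fun z : Spc N × ℝ => φ z.1 z.2) →
    HasCompactSupport (fun z : Spc N × ℝ => φ z.1 z.2) →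
    tsupport (fun z : Spc N × ℝ => φ z.1 z.2) ⊆ Ω ×ˢ I →
    Continuous g → (∃ L : ℝ≥0, LipschitzWith L g) →
    (∀ r : ℝ, HasDerivAt G (g r) r) →
    ∫ z : Spc N × ℝ in Ω ×ˢ I,
      (-(G (u z.1 z.2) * deriv (fun s : ℝ => φ z.1 s) z.2)
        + ‖sgrad u z.1 z.2‖ ^ (p - 2) *
            ⟪sgrad u z.1 z.2, gradient (fun y : Spc N => g (u y z.2) * φ y z.2) z.1⟫
        + f (u z.1 z.2) * g (u z.1 z.2) * φ z.1 z.2) = 0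

/-- the fundamental solution with initial data `k δ₀`. -/
def IsFundSol {N : ℕ} (p : ℝ) (f : ℝ → ℝ) (k : ℝ) (u : Spc N → ℝ → ℝ) : Prop :=
  (∀ x t, 0 ≤ u x t) ∧ (∀ x t, 0 < t → 0 < u x t) ∧
  ContinuousOn (fun z : Spc N × ℝ => u z.1 z.2) ((univ : Set (Spc N)) ×ˢ Ioi (0:ℝ)) ∧
  IsWeakSolution p f univ (Ioi 0) u ∧
  ∀ ζ : Spc N → ℝ, Continuous ζ → HasCompactSupport ζ →
    Tendsto (fun t : ℝ => ∫ x : Spc N, u x t * ζ x) (𝓝[>] (0:ℝ)) (𝓝 (k * ζ 0))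

noncomputable def Fint (f : ℝ → ℝ) (s : ℝ) : ℝ := ∫ σ in (0:ℝ)..s, f σ

/-- the Barenblatt exponent `λ = N/(N(p-2)+p)`. -/
noncomputable def lamBP (N : ℕ) (p : ℝ) : ℝ := (N : ℝ) / ((N : ℝ) * (p - 2) + p)

/-- the Barenblatt constant `d = ((p-2)/p) (λ/N)^{1/(p-1)}`. -/
noncomputable def dBP (N : ℕ) (p : ℝ) : ℝ :=
  ((p - 2) / p) * (lamBP N p / (N : ℝ)) ^ (1 / (p - 1))

/-- the explicit Barenblatt–Prattle fundamental solution of the `p`-Laplace heat equation. -/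
noncomputable def BP (N : ℕ) (p k Ck : ℝ) (x : Spc N) (t : ℝ) : ℝ :=
  if p = 2 then k * (4 * Real.pi * t) ^ (-(N : ℝ) / 2) * Real.exp (-‖x‖ ^ 2 / (4 * t))
  else t ^ (-(lamBP N p)) *
    (max (Ck - dBP N p * (‖x‖ * t ^ (-(lamBP N p) / (N : ℝ))) ^ (p / (p - 1))) 0)
      ^ ((p - 1) / (p - 2))


section AuxLemmas

open Metric Real

theorem meas_rpow_const (q : ℝ) : Measurable fun x : ℝ => x ^ q :=
  measurable_of_continuousOn_compl_singleton 0
    (fun x hx => (Real.continuousAt_rpow_const x q (Or.inl hx)).continuousWithinAt)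

theorem aux_subst (g : ℝ → ℝ) {γ α β c T : ℝ}
    (hβ : 0 < β) (hc : 0 < c) (hT : 0 < T) (hγe : β * γ = α + 1 + β)
    (hint : IntegrableOn (fun s => g s * s ^ (-γ)) (Ioi (c * T ^ (-β)))) :
    IntegrableOn (fun t => t ^ α * g (c * t ^ (-β))) (Ioo (0:ℝ) T) := by
  set s₀ : ℝ := c * T ^ (-β) with hs₀def
  have hs₀ : 0 < s₀ := mul_pos hc (rpow_pos_of_pos hT _)
  set φ : ℝ → ℝ := fun t => c * t ^ (-β) with hφdef
  set φ' : ℝ → ℝ := fun t => c * (-β * t ^ (-β - 1)) with hφ'def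
  have hφanti : StrictAntiOn φ (Ioo (0:ℝ) T) := by
    intro a ha b hb hab
    exact mul_lt_mul_of_pos_left (rpow_lt_rpow_of_neg ha.1 hab (neg_lt_zero.2 hβ)) hc
  have himg : φ '' (Ioo (0:ℝ) T) = Ioi s₀ := by
    ext s
    constructor
    · rintro ⟨t, ht, rfl⟩
      exact mul_lt_mul_of_pos_left (rpow_lt_rpow_of_neg ht.1 ht.2 (neg_lt_zero.2 hβ)) hc
    · intro hs
      have hs' : 0 < s := hs₀.trans hs
      refine ⟨(c / s) ^ (1/β), ⟨rpow_pos_of_pos (div_pos hc hs') _, ?_⟩, ?_⟩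
      · have h1 : c / s < T ^ β := by
          rw [div_lt_iff₀ hs']
          have : c = s₀ * T ^ β := by
            rw [hs₀def, mul_assoc, ← rpow_add hT, neg_add_cancel, rpow_zero, mul_one]
          rw [this, mul_comm s₀]
          exact mul_lt_mul_of_pos_left hs (rpow_pos_of_pos hT _)
        calc (c / s) ^ (1/β) < (T ^ β) ^ (1/β) :=
              rpow_lt_rpow (div_pos hc hs').le h1 (by positivity)
          _ = T := by
              rw [← rpow_mul hT.le, mul_one_div_cancel hβ.ne', rpow_one]
      · show c * ((c / s) ^ (1/β)) ^ (-β) = s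
        rw [← rpow_mul (div_pos hc hs').le]
        have h2 : 1 / β * -β = -1 := by field_simp
        rw [h2, rpow_neg_one, inv_div]
        field_simp
  have hderiv : ∀ t ∈ Ioo (0:ℝ) T, HasDerivWithinAt φ (φ' t) (Ioo (0:ℝ) T) t := by
    intro t ht
    exact (((Real.hasDerivAt_rpow_const (p := -β) (Or.inl ht.1.ne')).const_mul c).hasDerivWithinAt)
  have key := (integrableOn_image_iff_integrableOn_abs_deriv_smul measurableSet_Ioo hderiv
      hφanti.injOn (fun s => g s * s ^ (-γ)))
  rw [himg] at key
  have hint2 := key.mp hint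
  set C : ℝ := β * (c * c ^ (-γ)) with hCdef
  have hC : 0 < C := by positivity
  have heq : ∀ t ∈ Ioo (0:ℝ) T,
      C⁻¹ * (|φ' t| • (g (φ t) * φ t ^ (-γ))) = t ^ α * g (c * t ^ (-β)) := by
    intro t ht
    have ht0 : (0:ℝ) < t := ht.1
    have habs : |φ' t| = β * c * t ^ (-β - 1) := by
      have h1 : φ' t = -(β * c * t ^ (-β - 1)) := by rw [hφ'def]; ring
      rw [h1, abs_neg, abs_of_pos (by positivity)]
    have hpow : (φ t) ^ (-γ) = c ^ (-γ) * t ^ (β * γ) := by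
      rw [hφdef]
      dsimp only
      rw [mul_rpow hc.le (rpow_nonneg ht0.le _), ← rpow_mul ht0.le, neg_mul_neg]
    have hmerge : t ^ (-β - 1) * t ^ (β * γ) = t ^ α := by
      rw [← rpow_add ht0]; congr 1; linarith
    have hCC : C⁻¹ * (β * c * c ^ (-γ)) = 1 := by
      rw [hCdef]; field_simp
    calc C⁻¹ * (|φ' t| • (g (φ t) * φ t ^ (-γ)))
        = (C⁻¹ * (β * c * c ^ (-γ))) * (t ^ (-β - 1) * t ^ (β * γ)) * g (φ t) := by
          rw [smul_eq_mul, habs, hpow]; ring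
      _ = t ^ α * g (c * t ^ (-β)) := by rw [hCC, hmerge, hφdef]; ring
  exact IntegrableOn.congr_fun (hint2.const_mul C⁻¹) heq measurableSet_Ioo

theorem aux_tail (f : ℝ → ℝ) (hfc : ContinuousOn f (Ici 0)) {γ : ℝ}
    (hgrowth : IntegrableOn (fun s : ℝ => f s * s ^ (-γ)) (Ioi 1)) {s₀ : ℝ} (hs₀ : 0 < s₀) :
    IntegrableOn (fun s : ℝ => f (max s 0) * s ^ (-γ)) (Ioi s₀) := by
  have hgc : Continuous (fun s : ℝ => f (max s 0)) :=
    hfc.comp_continuous (continuous_id.max continuous_const) (fun s => mem_Ici.2 (le_max_right _ _))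
  have h1 : IntegrableOn (fun s : ℝ => f (max s 0) * s ^ (-γ)) (Ioc s₀ 1) := by
    apply (ContinuousOn.integrableOn_Icc ?_).mono_set Ioc_subset_Icc_self
    exact (hgc.continuousOn).mul (ContinuousOn.rpow_const continuousOn_id
      (fun s hs => Or.inl (ne_of_gt (lt_of_lt_of_le hs₀ hs.1))))
  have h2 : IntegrableOn (fun s : ℝ => f (max s 0) * s ^ (-γ)) (Ioi 1) := by
    apply hgrowth.congr_fun (fun s hs => ?_) measurableSet_Ioi
    rw [max_eq_left (by linarith [mem_Ioi.1 hs] : (0:ℝ) ≤ s)]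
  exact (h1.union h2).mono_set (fun s hs => by
    rcases le_or_gt s 1 with h | h
    · exact Or.inl ⟨mem_Ioi.1 hs, h⟩
    · exact Or.inr h)

theorem aux_radial {N : ℕ} (hN : 1 ≤ N) (G : ℝ → ℝ≥0∞) (hG : Measurable G)
    (hfin : ∫⁻ r in Ioi (0:ℝ), ENNReal.ofReal (r ^ (N - 1 : ℕ)) * G r ≠ ∞) :
    ∫⁻ x : Spc N, G ‖x‖ < ∞ := by
  haveI : Nonempty (Fin N) := ⟨⟨0, hN⟩⟩
  haveI : Nontrivial (Spc N) := inferInstance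
  set μ : Measure (Spc N) := volume with hμ
  have hdim : Module.finrank ℝ (Spc N) = N := finrank_euclideanSpace_fin
  have h1 : ∫⁻ x : Spc N, G ‖x‖ ∂μ = ∫⁻ x in ({0}ᶜ : Set (Spc N)), G ‖x‖ ∂μ := by
    rw [MeasureTheory.restrict_compl_singleton]
  have h2 : ∫⁻ x in ({0}ᶜ : Set (Spc N)), G ‖x‖ ∂μ
      = ∫⁻ x : ({0}ᶜ : Set (Spc N)), G ‖(x : Spc N)‖ ∂(μ.comap (↑)) := by
    exact (lintegral_subtype_comap (measurableSet_singleton _).compl (fun x => G ‖x‖)).symm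
  have h3 : ∫⁻ x : ({0}ᶜ : Set (Spc N)), G ‖(x : Spc N)‖ ∂(μ.comap (↑))
      = ∫⁻ q : Metric.sphere (0 : Spc N) 1 × Ioi (0:ℝ), G q.2
          ∂(μ.toSphere.prod (.volumeIoiPow (Module.finrank ℝ (Spc N) - 1))) := by
    simpa only [homeomorphUnitSphereProd_apply_snd_coe] using μ.measurePreserving_homeomorphUnitSphereProd.lintegral_comp_emb
      (Homeomorph.measurableEmbedding _) (fun q => G q.2)
  have h4 : ∫⁻ q : Metric.sphere (0 : Spc N) 1 × Ioi (0:ℝ), G q.2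
          ∂(μ.toSphere.prod (.volumeIoiPow (Module.finrank ℝ (Spc N) - 1)))
      = μ.toSphere univ * ∫⁻ r : Ioi (0:ℝ), G r ∂(.volumeIoiPow (N - 1)) := by
    rw [hdim, lintegral_prod (f := fun q : Metric.sphere (0 : Spc N) 1 × Ioi (0:ℝ) => G q.2)
      (hG.comp (measurable_subtype_coe.comp measurable_snd)).aemeasurable]
    simp [lintegral_const, mul_comm]
  have h5 : ∫⁻ r : Ioi (0:ℝ), G r ∂(.volumeIoiPow (N - 1))
      = ∫⁻ r in Ioi (0:ℝ), ENNReal.ofReal (r ^ (N - 1 : ℕ)) * G r := by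
    rw [Measure.volumeIoiPow, lintegral_withDensity_eq_lintegral_mul _
      (f := fun r : Ioi (0:ℝ) => ENNReal.ofReal (r.1 ^ (N - 1 : ℕ)))
      ((measurable_subtype_coe.pow_const _).ennreal_ofReal)
      (g := fun r : Ioi (0:ℝ) => G r.1) (hG.comp measurable_subtype_coe)]
    exact lintegral_subtype_comap measurableSet_Ioi
      (fun r => ENNReal.ofReal (r ^ (N - 1 : ℕ)) * G r)
  rw [h1, h2, h3, h4, h5]
  exact ENNReal.mul_lt_top (measure_ne_top _ _).lt_top hfin.lt_top

theorem hp_one_lt {N : ℕ} (hN : 1 ≤ N) {p : ℝ} (hp : 2 * (N : ℝ) / ((N : ℝ) + 1) < p) :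
    1 < p := by
  have h1 : (1:ℝ) ≤ 2 * (N:ℝ) / ((N:ℝ) + 1) := by
    rw [le_div_iff₀ (by positivity)]
    have : (1:ℝ) ≤ (N:ℝ) := by exact_mod_cast hN
    linarith
  linarith

theorem den_pos {N : ℕ} (hN : 1 ≤ N) {p : ℝ} (hp : 2 * (N : ℝ) / ((N : ℝ) + 1) < p) :
    0 < (N : ℝ) * (p - 2) + p := by
  have hN' : (1:ℝ) ≤ (N:ℝ) := by exact_mod_cast hN
  have h2 : 2 * (N:ℝ) < p * ((N:ℝ) + 1) := by
    rw [div_lt_iff₀ (by positivity)] at hp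
    linarith
  nlinarith

theorem lam_pos {N : ℕ} (hN : 1 ≤ N) {p : ℝ} (hp : 2 * (N : ℝ) / ((N : ℝ) + 1) < p) :
    0 < lamBP N p := by
  have hN' : (1:ℝ) ≤ (N:ℝ) := by exact_mod_cast hN
  exact div_pos (by linarith) (den_pos hN hp)

theorem gammaA {N : ℕ} (hN : 1 ≤ N) {p : ℝ} (hp : 2 * (N : ℝ) / ((N : ℝ) + 1) < p) :
    lamBP N p * (p * ((N : ℝ) + 1) / N) = lamBP N p + 1 + lamBP N p := by
  have hNpos : (0:ℝ) < (N:ℝ) := by exact_mod_cast hN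
  have hden := den_pos hN hp
  unfold lamBP
  field_simp
  ring

theorem gammaB {N : ℕ} (hN : 1 ≤ N) {p : ℝ} (hp : 2 * (N : ℝ) / ((N : ℝ) + 1) < p) :
    (N : ℝ) * (p * ((N : ℝ) + 1) / N)
      = ((N : ℝ) - 1 + (N : ℝ) / lamBP N p) + 1 + (N : ℝ) := by
  have hNpos : (0:ℝ) < (N:ℝ) := by exact_mod_cast hN
  have hden := den_pos hN hp
  unfold lamBP
  field_simp
  ring

theorem measurable_BP {N : ℕ} {p : ℝ} (k Ck : ℝ) :
    Measurable (fun z : Spc N × ℝ => BP N p k Ck z.1 z.2) := by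
  unfold BP
  split_ifs with h
  · apply Measurable.mul
    · apply Measurable.mul measurable_const
      exact (meas_rpow_const _).comp (measurable_const.mul measurable_snd)
    · exact (((measurable_fst.norm.pow measurable_const).neg).div
        (measurable_const.mul measurable_snd)).exp
  · apply Measurable.mul
    · exact (meas_rpow_const _).comp measurable_snd
    · apply (meas_rpow_const _).comp
      apply Measurable.max _ measurable_const
      apply Measurable.sub measurable_const
      apply Measurable.mul measurable_const
      exact (meas_rpow_const _).comp
        (measurable_fst.norm.mul ((meas_rpow_const _).comp measurable_snd))

theorem BP_nonneg {N : ℕ} {p : ℝ} (k Ck : ℝ) (hk : 0 < k) {x : Spc N} {t : ℝ} (ht : 0 < t) :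
    0 ≤ BP N p k Ck x t := by
  unfold BP
  split_ifs with h
  · have := Real.pi_pos
    positivity
  · exact mul_nonneg (rpow_nonneg ht.le _) (rpow_nonneg (le_max_right _ _) _)

theorem BP_mono {N : ℕ} (hN : 1 ≤ N) {p : ℝ} (hp : 2 * (N : ℝ) / ((N : ℝ) + 1) < p)
    (k Ck : ℝ) (hk : 0 < k) (hCk : 0 < Ck) {x y : Spc N} {t : ℝ} (ht : 0 < t)
    (hxy : ‖y‖ ≤ ‖x‖) : BP N p k Ck x t ≤ BP N p k Ck y t := by
  have hp1' : 1 < p := hp_one_lt hN hp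
  unfold BP
  split_ifs with h
  · apply mul_le_mul_of_nonneg_left
    · apply Real.exp_le_exp.2
      have h2 : ‖y‖ ^ 2 ≤ ‖x‖ ^ 2 := pow_le_pow_left₀ (norm_nonneg _) hxy 2
      have h4t : (0:ℝ) < 4 * t := by linarith
      exact (div_le_div_iff_of_pos_right h4t).2 (by linarith)
    · have := Real.pi_pos
      positivity
  · set lam := lamBP N p with hlam
    have hq : 0 ≤ p / (p - 1) := div_nonneg (by linarith) (by linarith)
    set c := t ^ (-lam / (N : ℝ)) with hc
    have hc0 : 0 ≤ c := rpow_nonneg ht.le _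
    have hρ : (‖y‖ * c) ^ (p / (p-1)) ≤ (‖x‖ * c) ^ (p / (p-1)) :=
      rpow_le_rpow (mul_nonneg (norm_nonneg _) hc0)
        (mul_le_mul_of_nonneg_right hxy hc0) hq
    have hρ0 : 0 ≤ (‖y‖ * c) ^ (p / (p-1)) := rpow_nonneg (mul_nonneg (norm_nonneg _) hc0) _
    have hNpos : (0:ℝ) < (N:ℝ) := by exact_mod_cast hN
    have hfac : 0 < (lamBP N p / (N:ℝ)) ^ (1/(p-1)) :=
      rpow_pos_of_pos (div_pos (lam_pos hN hp) hNpos) _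
    rcases lt_or_gt_of_ne h with hlt | hgt
    · have hd : dBP N p < 0 :=
        mul_neg_of_neg_of_pos (div_neg_of_neg_of_pos (by linarith) (by linarith)) hfac
      have h1 : Ck ≤ Ck - dBP N p * (‖y‖ * c) ^ (p/(p-1)) := by nlinarith
      have h2 : Ck - dBP N p * (‖y‖ * c) ^ (p/(p-1))
          ≤ Ck - dBP N p * (‖x‖ * c) ^ (p/(p-1)) := by nlinarith
      rw [max_eq_left (by linarith), max_eq_left (by linarith)]
      apply mul_le_mul_of_nonneg_left _ (rpow_nonneg ht.le _)
      exact rpow_le_rpow_of_nonpos (by linarith) h2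
        (le_of_lt (div_neg_of_pos_of_neg (by linarith) (by linarith)))
    · have hd : 0 < dBP N p := mul_pos (div_pos (by linarith) (by linarith)) hfac
      apply mul_le_mul_of_nonneg_left _ (rpow_nonneg ht.le _)
      apply rpow_le_rpow (le_max_right _ _) (max_le_max _ le_rfl)
        (div_nonneg (by linarith) (by linarith))
      nlinarith

theorem BP_zero {N : ℕ} (hN : 1 ≤ N) {p : ℝ} (hp : 2 * (N : ℝ) / ((N : ℝ) + 1) < p)
    (k Ck : ℝ) (hk : 0 < k) (hCk : 0 < Ck) {t : ℝ} (ht : 0 < t) :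
    BP N p k Ck 0 t = (if p = 2 then k * (4 * Real.pi) ^ (-(N : ℝ) / 2)
      else Ck ^ ((p - 1) / (p - 2))) * t ^ (-(lamBP N p)) := by
  have hp1' : 1 < p := hp_one_lt hN hp
  unfold BP
  split_ifs with h
  · have hlam2 : lamBP N 2 = (N : ℝ) / 2 := by unfold lamBP; norm_num
    subst h
    rw [norm_zero, hlam2]
    norm_num
    rw [mul_rpow (by positivity) ht.le, neg_div]
    ring
  · rw [norm_zero, zero_mul, Real.zero_rpow (ne_of_gt (div_pos (by linarith) (by linarith))),
      mul_zero, sub_zero, max_eq_left hCk.le, mul_comm]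

theorem BP_decay {N : ℕ} (hN : 1 ≤ N) {p : ℝ} (hp : 2 * (N : ℝ) / ((N : ℝ) + 1) < p)
    (k Ck : ℝ) (hk : 0 < k) (hCk : 0 < Ck)
    (hmass : ∀ t : ℝ, 0 < t → (∫ x : Spc N, BP N p k Ck x t) = k)
    {t : ℝ} (ht : 0 < t) {x : Spc N} (hx : x ≠ 0) :
    BP N p k Ck x t ≤ (k / (volume (Metric.ball (0:Spc N) 1)).toReal) * ‖x‖ ^ (-(N:ℝ)) := by
  haveI : Nonempty (Fin N) := ⟨⟨0, hN⟩⟩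
  haveI : Nontrivial (Spc N) := inferInstance
  set r := ‖x‖ with hrdef
  have hr : 0 < r := norm_pos_iff.2 hx
  have hint : Integrable (fun y => BP N p k Ck y t) := by
    by_contra hcon
    have := hmass t ht
    rw [integral_undef hcon] at this
    exact hk.ne this
  have hv1 : 0 < (volume (ball (0:Spc N) 1)).toReal :=
    ENNReal.toReal_pos (measure_ball_pos _ _ one_pos).ne' measure_ball_lt_top.ne
  have hvol : (volume (ball (0:Spc N) r)).toReal
      = r ^ N * (volume (ball (0:Spc N) 1)).toReal := by
    rw [Measure.addHaar_ball _ _ hr.le, finrank_euclideanSpace_fin, ENNReal.toReal_mul,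
      ENNReal.toReal_ofReal (by positivity)]
  have hlow : BP N p k Ck x t * (volume (ball (0:Spc N) r)).toReal
      ≤ ∫ y in ball (0:Spc N) r, BP N p k Ck y t :=
    setIntegral_ge_of_const_le_real (c := BP N p k Ck x t) measurableSet_ball measure_ball_lt_top.ne
      (fun y hy => BP_mono hN hp k Ck hk hCk ht (le_of_lt (mem_ball_zero_iff.1 hy)))
      hint.integrableOn
  have hup : ∫ y in ball (0:Spc N) r, BP N p k Ck y t ≤ k := by
    exact le_trans (setIntegral_le_integral hint
      (Filter.Eventually.of_forall fun y => BP_nonneg k Ck hk ht)) (le_of_eq (hmass t ht))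
  rw [hvol] at hlow
  have hcomb : BP N p k Ck x t * (r ^ N * (volume (ball (0:Spc N) 1)).toReal) ≤ k :=
    le_trans hlow hup
  have h2 : BP N p k Ck x t ≤ k / (r ^ N * (volume (ball (0:Spc N) 1)).toReal) :=
    (le_div_iff₀ (by positivity)).2 hcomb
  calc BP N p k Ck x t ≤ k / (r ^ N * (volume (ball (0:Spc N) 1)).toReal) := h2
    _ = (k / (volume (ball (0:Spc N) 1)).toReal) * r ^ (-(N:ℝ)) := by
        rw [Real.rpow_neg hr.le, Real.rpow_natCast, div_mul_eq_div_div_swap, div_eq_mul_inv]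

end AuxLemmas

/-- under the growth condition on `f`, `f(v_k)` is integrable near the
initial singularity. -/
theorem absorption_of_Barenblatt_integrable
    {N : ℕ} (hN : 1 ≤ N) {p : ℝ} (hp : 2 * (N : ℝ) / ((N : ℝ) + 1) < p)
    (f : ℝ → ℝ) (hfc : ContinuousOn f (Ici 0)) (hfm : MonotoneOn f (Ici 0))
    (hf0 : f 0 = 0)
    (hgrowth : IntegrableOn (fun s : ℝ => f s * s ^ (-(p * ((N : ℝ) + 1) / N))) (Ioi 1))
    (k Ck : ℝ) (hk : 0 < k) (hCk : 0 < Ck)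
    (hmass : ∀ t : ℝ, 0 < t → (∫ x : Spc N, BP N p k Ck x t) = k) :
    ∀ R T : ℝ, 0 < R → 0 < T →
      IntegrableOn (fun z : Spc N × ℝ => f (BP N p k Ck z.1 z.2))
        (Metric.ball (0 : Spc N) R ×ˢ Ioo (0:ℝ) T) := by
  intro R T hR hT
  haveI : Nonempty (Fin N) := ⟨⟨0, hN⟩⟩
  haveI : Nontrivial (Spc N) := inferInstance
  have hp1' : 1 < p := hp_one_lt hN hp
  have hNpos : (0:ℝ) < (N:ℝ) := by exact_mod_cast hN
  have hNne : (N:ℝ) ≠ 0 := hNpos.ne'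
  have hlam : 0 < lamBP N p := lam_pos hN hp
  set lam : ℝ := lamBP N p with hlamdef
  set g : ℝ → ℝ := fun s => f (max s 0) with hgdef
  have hgc : Continuous g :=
    hfc.comp_continuous (continuous_id.max continuous_const) (fun s => mem_Ici.2 (le_max_right _ _))
  have hgmono : Monotone g := fun a b hab =>
    hfm (mem_Ici.2 (le_max_right _ _)) (mem_Ici.2 (le_max_right _ _)) (max_le_max hab le_rfl)
  have hg0 : ∀ s, 0 ≤ g s := fun s =>
    hf0 ▸ hfm (mem_Ici.2 le_rfl) (mem_Ici.2 (le_max_right s 0)) (le_max_right s 0)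
  set M : ℝ := if p = 2 then k * (4 * Real.pi) ^ (-(N : ℝ) / 2) else Ck ^ ((p - 1) / (p - 2))
    with hMdef
  have hM : 0 < M := by
    rw [hMdef]; split_ifs
    · have := Real.pi_pos; positivity
    · exact Real.rpow_pos_of_pos hCk _
  have hsup : ∀ (x : Spc N) (t : ℝ), 0 < t → BP N p k Ck x t ≤ M * t ^ (-lam) := by
    intro x t ht
    refine le_trans (BP_mono hN hp k Ck hk hCk (y := 0) ht ?_) (le_of_eq ?_)
    · rw [norm_zero]; exact norm_nonneg x
    · rw [BP_zero hN hp k Ck hk hCk ht, hMdef, hlamdef]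
  set K : ℝ := k / (volume (Metric.ball (0:Spc N) 1)).toReal with hKdef
  have hv1 : 0 < (volume (Metric.ball (0:Spc N) 1)).toReal :=
    ENNReal.toReal_pos (Metric.measure_ball_pos _ _ one_pos).ne' measure_ball_lt_top.ne
  have hK : 0 < K := div_pos hk hv1
  have hdecay : ∀ t : ℝ, 0 < t → ∀ x : Spc N, x ≠ 0 →
      BP N p k Ck x t ≤ K * ‖x‖ ^ (-(N:ℝ)) :=
    fun t ht x hx => BP_decay hN hp k Ck hk hCk hmass ht hx
  -- one-dimensional integrability
  have htail : ∀ s₀ : ℝ, 0 < s₀ →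
      IntegrableOn (fun s => g s * s ^ (-(p * ((N:ℝ) + 1) / N))) (Ioi s₀) :=
    fun s₀ h => aux_tail f hfc hgrowth h
  have hA : IntegrableOn (fun t => t ^ lam * g (M * t ^ (-lam))) (Ioo (0:ℝ) T) :=
    aux_subst g hlam hM hT (by rw [hlamdef]; exact gammaA hN hp)
      (htail _ (by positivity))
  have hB : IntegrableOn
      (fun r => r ^ ((N:ℝ) - 1 + (N:ℝ)/lam) * g (K * r ^ (-(N:ℝ)))) (Ioo (0:ℝ) R) :=
    aux_subst g hNpos hK hR (by rw [hlamdef]; exact gammaB hN hp)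
      (htail _ (by positivity))
  -- measurability
  have hBPm : Measurable (fun z : Spc N × ℝ => BP N p k Ck z.1 z.2) := measurable_BP k Ck
  have hgBPm : Measurable (fun z : Spc N × ℝ => g (BP N p k Ck z.1 z.2)) :=
    hgc.measurable.comp hBPm
  set E : Set (Spc N × ℝ) := {z | M * z.2 ^ (-lam) ≤ K * ‖z.1‖ ^ (-(N:ℝ))} with hEdef
  have hEm : MeasurableSet E :=
    measurableSet_le (measurable_const.mul ((meas_rpow_const _).comp measurable_snd))
      (measurable_const.mul ((meas_rpow_const _).comp measurable_fst.norm))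
  set A : ℝ → ℝ≥0∞ := fun t => ENNReal.ofReal (g (M * t ^ (-lam))) with hAdef
  set Bf : Spc N → ℝ≥0∞ := fun x => ENNReal.ofReal (g (K * ‖x‖ ^ (-(N:ℝ)))) with hBfdef
  have hAm : Measurable A :=
    (hgc.measurable.comp (measurable_const.mul (meas_rpow_const _))).ennreal_ofReal
  have hBfm : Measurable Bf :=
    (hgc.measurable.comp (measurable_const.mul
      ((meas_rpow_const _).comp measurable_norm))).ennreal_ofReal
  set H₁ : Spc N × ℝ → ℝ≥0∞ := E.indicator (fun z => A z.2) with hH₁def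
  set H₂ : Spc N × ℝ → ℝ≥0∞ := Eᶜ.indicator (fun z => Bf z.1) with hH₂def
  have hH₁m : Measurable H₁ := (hAm.comp measurable_snd).indicator hEm
  have hH₂m : Measurable H₂ := (hBfm.comp measurable_fst).indicator hEm.compl
  set ν := (volume.restrict (Metric.ball (0:Spc N) R)).prod (volume.restrict (Ioo (0:ℝ) T))
    with hνdef
  -- piece 1
  have hfin1 : ∫⁻ z, H₁ z ∂ν < ⊤ := by
    rw [hνdef, lintegral_prod_symm _ hH₁m.aemeasurable]
    have hAint : IntegrableOn (fun t => K / M * (t ^ lam * g (M * t ^ (-lam))))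
      (Ioo (0:ℝ) T) := hA.const_mul _
    calc ∫⁻ t in Ioo (0:ℝ) T, ∫⁻ x in Metric.ball (0:Spc N) R, H₁ (x, t) ∂volume ∂volume
        ≤ ∫⁻ t in Ioo (0:ℝ) T, ENNReal.ofReal (K / M * (t ^ lam * g (M * t ^ (-lam))))
            * volume (Metric.closedBall (0:Spc N) 1) ∂volume := ?_
      _ < ⊤ := ?_
    · apply lintegral_mono_ae
      filter_upwards [ae_restrict_mem measurableSet_Ioo] with t ht
      set r : ℝ := (K / M * t ^ lam) ^ (1 / (N:ℝ)) with hrdef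
      have hrnn : 0 ≤ r := Real.rpow_nonneg (mul_nonneg (le_of_lt (div_pos hK hM)) (Real.rpow_nonneg ht.1.le _)) _
      have hptw : ∀ x : Spc N,
          H₁ (x, t) ≤ (Metric.closedBall (0:Spc N) r).indicator (fun _ => A t) x := by
        intro x
        by_cases hxE : (x, t) ∈ E
        · have hx0 : x ≠ 0 := by
            rintro rfl
            have hxE' : M * t ^ (-lam) ≤ K * ‖(0:Spc N)‖ ^ (-(N:ℝ)) := hxE
            rw [norm_zero, Real.zero_rpow (neg_ne_zero.2 hNne), mul_zero] at hxE'
            nlinarith [Real.rpow_pos_of_pos ht.1 (-lam)]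
          have hxpos : 0 < ‖x‖ := norm_pos_iff.2 hx0
          have hmem : x ∈ Metric.closedBall (0:Spc N) r := by
            rw [Metric.mem_closedBall, dist_zero_right]
            have hE' : M * t ^ (-lam) ≤ K * (‖x‖ ^ (N:ℝ))⁻¹ := by
              have h := hxE
              rwa [hEdef, mem_setOf_eq, Real.rpow_neg (norm_nonneg x)] at h
            have hxN : 0 < ‖x‖ ^ (N:ℝ) := Real.rpow_pos_of_pos hxpos _
            have h1 : ‖x‖ ^ (N:ℝ) * (M * t ^ (-lam)) ≤ K := by
              have h2 := mul_le_mul_of_nonneg_left hE' hxN.le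
              have h3 : ‖x‖ ^ (N:ℝ) * (K * (‖x‖ ^ (N:ℝ))⁻¹) = K := by
                field_simp
              linarith [h2, le_of_eq h3]
            have h3 : ‖x‖ ^ (N:ℝ) ≤ K / (M * t ^ (-lam)) :=
              (le_div_iff₀ (mul_pos hM (Real.rpow_pos_of_pos ht.1 _))).2 h1
            have h4 : K / (M * t ^ (-lam)) = K / M * t ^ lam := by
              rw [Real.rpow_neg ht.1.le]
              field_simp
            have h5 : ‖x‖ ^ (N:ℝ) ≤ K / M * t ^ lam := h4 ▸ h3
            calc ‖x‖ = (‖x‖ ^ (N:ℝ)) ^ (1/(N:ℝ)) := by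
                  rw [← Real.rpow_mul (norm_nonneg x), mul_one_div, div_self hNne,
                    Real.rpow_one]
              _ ≤ r := Real.rpow_le_rpow (Real.rpow_nonneg (norm_nonneg x) _) h5
                  (by positivity)
          rw [hH₁def, indicator_of_mem hxE, indicator_of_mem hmem]
        · rw [hH₁def, indicator_of_notMem hxE]; exact zero_le
      calc ∫⁻ x in Metric.ball (0:Spc N) R, H₁ (x, t) ∂volume
          ≤ ∫⁻ x in Metric.ball (0:Spc N) R,
              (Metric.closedBall (0:Spc N) r).indicator (fun _ => A t) x ∂volume :=
            lintegral_mono (fun x => hptw x)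
        _ ≤ ∫⁻ x, (Metric.closedBall (0:Spc N) r).indicator (fun _ => A t) x ∂volume :=
            setLIntegral_le_lintegral _ _
        _ = A t * volume (Metric.closedBall (0:Spc N) r) :=
            lintegral_indicator_const measurableSet_closedBall _
        _ = ENNReal.ofReal (K / M * (t ^ lam * g (M * t ^ (-lam))))
            * volume (Metric.closedBall (0:Spc N) 1) := by
            rw [Measure.addHaar_closedBall' _ _ hrnn, finrank_euclideanSpace_fin]
            have hrN : r ^ (N:ℕ) = K / M * t ^ lam := by
              rw [hrdef, ← Real.rpow_natCast ((K / M * t ^ lam) ^ (1/(N:ℝ))) N,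
                ← Real.rpow_mul (mul_nonneg (le_of_lt (div_pos hK hM))
                  (Real.rpow_nonneg ht.1.le _)), one_div, inv_mul_cancel₀ hNne,
                Real.rpow_one]
            rw [hrN, hAdef, ← mul_assoc, ← ENNReal.ofReal_mul (hg0 _)]
            congr 2
            ring
    · have hmeas : Measurable fun t : ℝ =>
          ENNReal.ofReal (K / M * (t ^ lam * g (M * t ^ (-lam)))) :=
        (((meas_rpow_const _).mul (hgc.measurable.comp
          (measurable_const.mul (meas_rpow_const _)))).const_mul _).ennreal_ofReal
      rw [lintegral_mul_const _ hmeas]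
      exact ENNReal.mul_lt_top hAint.lintegral_lt_top measure_closedBall_lt_top
  -- piece 2
  have hfin2 : ∫⁻ z, H₂ z ∂ν < ⊤ := by
    rw [hνdef, lintegral_prod _ hH₂m.aemeasurable]
    set τ : Spc N → ℝ := fun x => (M / K * ‖x‖ ^ (N:ℝ)) ^ (1 / lam) with hτdef
    have hclaim : ∀ x : Spc N,
        ∫⁻ t in Ioo (0:ℝ) T, H₂ (x, t) ∂volume ≤ Bf x * ENNReal.ofReal (τ x) := by
      intro x
      have hptw : ∀ t ∈ Ioo (0:ℝ) T,
          H₂ (x, t) ≤ (Ioo (0:ℝ) (τ x)).indicator (fun _ => Bf x) t := by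
        intro t ht
        by_cases hz : (x, t) ∈ E
        · rw [hH₂def, indicator_of_notMem (by simpa using hz : (x,t) ∉ Eᶜ)]
          exact zero_le
          
        · by_cases hx0 : x = 0
          · subst hx0
            have hB0 : Bf (0:Spc N) = 0 := by
              rw [hBfdef]
              simp only [norm_zero]
              rw [Real.zero_rpow (neg_ne_zero.2 hNne), mul_zero]
              rw [hgdef]
              simp [hf0]
            have h1 : H₂ ((0:Spc N), t) ≤ Bf (0:Spc N) :=
              Set.indicator_le_self' (fun _ _ => zero_le) ((0:Spc N), t)
            exact le_trans (le_of_le_of_eq h1 hB0) (zero_le)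
          · have hxpos : 0 < ‖x‖ := norm_pos_iff.2 hx0
            have hE' : K * ‖x‖ ^ (-(N:ℝ)) < M * t ^ (-lam) := not_le.1 hz
            have ht0 : 0 < t := ht.1
            have h1 : K * (‖x‖ ^ (N:ℝ))⁻¹ < M * (t ^ lam)⁻¹ := by
              rwa [Real.rpow_neg (norm_nonneg x), Real.rpow_neg ht0.le] at hE'
            have hxN : 0 < ‖x‖ ^ (N:ℝ) := Real.rpow_pos_of_pos hxpos _
            have htl : 0 < t ^ lam := Real.rpow_pos_of_pos ht0 _
            have h1' : K / ‖x‖ ^ (N:ℝ) < M / t ^ lam := by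
              rwa [div_eq_mul_inv, div_eq_mul_inv]
            have h2 : t ^ lam < M / K * ‖x‖ ^ (N:ℝ) := by
              have h3 := (div_lt_div_iff₀ hxN htl).1 h1'
              rw [div_mul_eq_mul_div, lt_div_iff₀ hK]
              linarith
            have h3 : t < τ x := by
              calc t = (t ^ lam) ^ (1/lam) := by
                    rw [← Real.rpow_mul ht0.le, mul_one_div, div_self hlam.ne',
                      Real.rpow_one]
                _ < τ x := by
                    rw [hτdef]
                    exact Real.rpow_lt_rpow htl.le h2 (by positivity)
            rw [hH₂def, indicator_of_mem (Set.mem_compl hz), indicator_of_mem (Set.mem_Ioo.2 ⟨ht.1, h3⟩)]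
      calc ∫⁻ t in Ioo (0:ℝ) T, H₂ (x, t) ∂volume
          ≤ ∫⁻ t in Ioo (0:ℝ) T, (Ioo (0:ℝ) (τ x)).indicator (fun _ => Bf x) t ∂volume := by
            apply lintegral_mono_ae
            filter_upwards [ae_restrict_mem measurableSet_Ioo] with t ht
            exact hptw t ht
        _ ≤ ∫⁻ t, (Ioo (0:ℝ) (τ x)).indicator (fun _ => Bf x) t ∂volume :=
            setLIntegral_le_lintegral _ _
        _ = Bf x * volume (Ioo (0:ℝ) (τ x)) := lintegral_indicator_const measurableSet_Ioo _
        _ ≤ Bf x * ENNReal.ofReal (τ x) := by rw [Real.volume_Ioo, sub_zero]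
    set Φ : ℝ → ℝ≥0∞ := fun r => if r < R then
        ENNReal.ofReal (g (K * r ^ (-(N:ℝ))) * ((M / K * r ^ (N:ℝ)) ^ (1 / lam))) else 0
      with hΦdef
    have hΦm : Measurable Φ := by
      apply Measurable.ite (measurableSet_lt measurable_id measurable_const) _ measurable_const
      exact ((hgc.measurable.comp (measurable_const.mul (meas_rpow_const _))).mul
        ((meas_rpow_const _).comp (measurable_const.mul (meas_rpow_const _)))).ennreal_ofReal
    have hint2 : IntegrableOn (fun r => (M/K) ^ (1/lam) *
        (r ^ ((N:ℝ) - 1 + (N:ℝ)/lam) * g (K * r ^ (-(N:ℝ))))) (Ioo (0:ℝ) R) :=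
      hB.const_mul _
    calc ∫⁻ x in Metric.ball (0:Spc N) R, ∫⁻ t in Ioo (0:ℝ) T, H₂ (x, t) ∂volume ∂volume
        ≤ ∫⁻ x in Metric.ball (0:Spc N) R, Bf x * ENNReal.ofReal (τ x) ∂volume :=
          lintegral_mono (fun x => hclaim x)
      _ = ∫⁻ x : Spc N, Φ ‖x‖ := by
          rw [← lintegral_indicator measurableSet_ball]
          apply lintegral_congr
          intro x
          by_cases hx : x ∈ Metric.ball (0:Spc N) R
          · rw [indicator_of_mem hx]
            simp only [hΦdef]
            rw [if_pos (mem_ball_zero_iff.1 hx)]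
            rw [hBfdef, hτdef, ← ENNReal.ofReal_mul (hg0 _)]
          · rw [indicator_of_notMem hx]
            simp only [hΦdef]
            rw [if_neg (not_lt.2 (by simpa [mem_ball_zero_iff, not_lt] using hx))]
      _ < ⊤ := by
          apply aux_radial hN Φ hΦm
          apply ne_of_lt
          calc ∫⁻ r in Ioi (0:ℝ), ENNReal.ofReal (r ^ (N - 1 : ℕ)) * Φ r
              ≤ ∫⁻ r in Ioi (0:ℝ), (Ioo (0:ℝ) R).indicator (fun r =>
                  ENNReal.ofReal ((M/K) ^ (1/lam) *
                    (r ^ ((N:ℝ) - 1 + (N:ℝ)/lam) * g (K * r ^ (-(N:ℝ)))))) r := by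
                apply lintegral_mono_ae
                filter_upwards [ae_restrict_mem measurableSet_Ioi] with r hr
                have hr0 : (0:ℝ) < r := hr
                simp only [hΦdef]
                by_cases hrR : r < R
                · rw [if_pos hrR, indicator_of_mem (Set.mem_Ioo.2 ⟨hr0, hrR⟩),
                    ← ENNReal.ofReal_mul (by positivity)]
                  apply ENNReal.ofReal_le_ofReal
                  apply le_of_eq
                  have h1 : (r:ℝ) ^ (N-1:ℕ) = r ^ ((N:ℝ) - 1) := by
                    rw [← Real.rpow_natCast r (N-1), Nat.cast_sub hN, Nat.cast_one]
                  have h2 : (M / K * r ^ (N:ℝ)) ^ (1/lam)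
                      = (M/K) ^ (1/lam) * r ^ ((N:ℝ)/lam) := by
                    rw [Real.mul_rpow (by positivity) (Real.rpow_nonneg hr0.le _),
                      ← Real.rpow_mul hr0.le, mul_one_div]
                  have h3 : r ^ ((N:ℝ) - 1) * r ^ ((N:ℝ)/lam)
                      = r ^ ((N:ℝ) - 1 + (N:ℝ)/lam) := (Real.rpow_add hr0 _ _).symm
                  rw [h1, h2, ← h3]
                  ring
                · rw [if_neg hrR, mul_zero]
                  exact zero_le
            _ ≤ ∫⁻ r, (Ioo (0:ℝ) R).indicator (fun r =>
                  ENNReal.ofReal ((M/K) ^ (1/lam) *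
                    (r ^ ((N:ℝ) - 1 + (N:ℝ)/lam) * g (K * r ^ (-(N:ℝ)))))) r :=
                setLIntegral_le_lintegral _ _
            _ = ∫⁻ r in Ioo (0:ℝ) R, ENNReal.ofReal ((M/K) ^ (1/lam) *
                  (r ^ ((N:ℝ) - 1 + (N:ℝ)/lam) * g (K * r ^ (-(N:ℝ))))) :=
                lintegral_indicator measurableSet_Ioo _
            _ < ⊤ := hint2.lintegral_lt_top
  -- assembly
  have hset : MeasurableSet (Metric.ball (0:Spc N) R ×ˢ Ioo (0:ℝ) T) :=
    measurableSet_ball.prod measurableSet_Ioo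
  have hprod : volume.restrict (Metric.ball (0:Spc N) R ×ˢ Ioo (0:ℝ) T) = ν := by
    rw [hνdef, Measure.prod_restrict, ← Measure.volume_eq_prod]
  have hmain : IntegrableOn (fun z : Spc N × ℝ => g (BP N p k Ck z.1 z.2))
      (Metric.ball (0:Spc N) R ×ˢ Ioo (0:ℝ) T) := by
    refine ⟨hgBPm.aestronglyMeasurable, ?_⟩
    rw [hasFiniteIntegral_iff_ofReal (Filter.Eventually.of_forall (fun z => hg0 _))]
    rw [hprod]
    have hae2 : ∀ᵐ z ∂ν, (z : Spc N × ℝ).1 ≠ 0 := by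
      have hnull : ν {z : Spc N × ℝ | z.1 = 0} = 0 := by
        apply measure_mono_null (t := ({0} : Set (Spc N)) ×ˢ (univ : Set ℝ))
          (by intro z hz; exact ⟨hz, trivial⟩)
        rw [hνdef, Measure.prod_prod]
        have h0 : (volume.restrict (Metric.ball (0:Spc N) R)) ({0} : Set (Spc N)) = 0 := by
          rw [Measure.restrict_apply (measurableSet_singleton _)]
          exact measure_mono_null inter_subset_left (measure_singleton _)
        rw [h0, zero_mul]
      refine ae_iff.2 ?_
      simpa only [not_not] using hnull
    have haemem : ∀ᵐ z ∂ν, z ∈ Metric.ball (0:Spc N) R ×ˢ Ioo (0:ℝ) T := by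
      rw [← hprod]; exact ae_restrict_mem hset
    calc ∫⁻ z, ENNReal.ofReal (g (BP N p k Ck z.1 z.2)) ∂ν
        ≤ ∫⁻ z, (H₁ z + H₂ z) ∂ν := by
          apply lintegral_mono_ae
          filter_upwards [haemem, hae2] with z hz hz1
          by_cases hzE : z ∈ E
          · refine le_trans ?_ le_self_add
            rw [hH₁def, indicator_of_mem hzE]
            exact ENNReal.ofReal_le_ofReal (hgmono (hsup z.1 z.2 hz.2.1))
          · refine le_trans ?_ le_add_self
            rw [hH₂def, indicator_of_mem (Set.mem_compl hzE)]
            exact ENNReal.ofReal_le_ofReal (hgmono (hdecay _ hz.2.1 _ hz1))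
      _ < ⊤ := by
          rw [lintegral_add_left hH₁m]
          exact ENNReal.add_lt_top.2 ⟨hfin1, hfin2⟩
  exact hmain.congr_fun (fun z hz => by
    rw [hgdef]
    simp only
    rw [max_eq_left (BP_nonneg k Ck hk hz.2.1)]) hset


end
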